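/- Let G be a graph and let A,B ⊆ Ω_E(G) be sets of edge-ends with Ā ∩ B = A ∩ B̄ = ∅ (closures in Ω_E(G)). Let κ be the supremum of the cardinalities of families of pairwise edge-disjoint A–B paths. If κ is infinite, then every ⊆-maximal family of pairwise edge-disjoint A–B paths has cardinality κ; in particular, the supremum is attained. -/

import Mathlib

/-!
Formalization of definitions and a statement from
"Edge-connectivity and edge-ends in infinite graphs" (arXiv:2404.17106).
-/

universe u

namespace EdgeEndPaper

variable {V : Type u}

/-- A ray in `G`: a one-way infinite path `v₀v₁v₂…`. -/
structure Ray (G : SimpleGraph V) : Type u where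
  f : ℕ → V
  inj : Function.Injective f
  adj : ∀ n : ℕ, G.Adj (f n) (f (n + 1))

/-- A double ray in `G`: a two-way infinite path. -/
structure DoubleRay (G : SimpleGraph V) : Type u where
  f : ℤ → V
  inj : Function.Injective f
  adj : ∀ n : ℤ, G.Adj (f n) (f (n + 1))

variable (G : SimpleGraph V)

/-- The tails of the rays `r` and `s` lie in the same connected component of `G - F`
(deletion of the edges in `F`). -/
def SameComp (F : Set (Sym2 V)) (r s : Ray G) : Prop :=
  ∃ N : ℕ, ∀ m n : ℕ, N ≤ m → N ≤ n → (G.deleteEdges F).Reachable (r.f m) (s.f n)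

/-- Edge-equivalence of rays: no finite edge set separates the tails of `r` and `s`. -/
def EdgeEquiv (r s : Ray G) : Prop :=
  ∀ F : Set (Sym2 V), F.Finite → SameComp G F r s

/-- The edge-end space `Ω_E(G)`. -/
def EdgeEnd : Type u := Quot (EdgeEquiv G)

/-- The edge-end `[r]_E` of a ray `r`. -/
def Ray.edgeEnd {G : SimpleGraph V} (r : Ray G) : EdgeEnd G := Quot.mk _ r

/-- `C_E(F, ω)` : the vertices of the connected component of `G - F` in which `ω` has a tail. -/
def CE (F : Set (Sym2 V)) (ω : EdgeEnd G) : Set V :=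
  {v | ∃ r : Ray G, r.edgeEnd = ω ∧ ∃ N : ℕ, ∀ n : ℕ, N ≤ n →
    (G.deleteEdges F).Reachable (r.f n) v}

/-- `Ω_E(F, ω)` : the edge-ends whose rays have tails in the same component of `G - F`
as the rays of `ω`. -/
def OmegaE (F : Set (Sym2 V)) (ω : EdgeEnd G) : Set (EdgeEnd G) :=
  {η | ∃ r s : Ray G, r.edgeEnd = ω ∧ s.edgeEnd = η ∧ SameComp G F r s}

/-- The topology on `Ω_E(G)`, with the sets `Ω_E(F, ω)` (for finite `F ⊆ E(G)`) as a basis. -/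
def edgeEndTopology : TopologicalSpace (EdgeEnd G) :=
  .generateFrom {U | ∃ (F : Set (Sym2 V)) (ω : EdgeEnd G),
    F.Finite ∧ F ⊆ G.edgeSet ∧ U = OmegaE G F ω}

/-- `Ê(F, ω) = C_E(F, ω) ∪ Ω_E(F, ω)`, inside `Ê(G) = V(G) ⊔ Ω_E(G)`. -/
def EHatBasic (F : Set (Sym2 V)) (ω : EdgeEnd G) : Set (V ⊕ EdgeEnd G) :=
  Sum.inl '' CE G F ω ∪ Sum.inr '' OmegaE G F ω

/-- The topology on `Ê(G) = V(G) ∪ Ω_E(G)`: the vertex singletons together with the sets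
`Ê(F, ω)` (for finite `F ⊆ E(G)`) form a basis. -/
def eHatTopology : TopologicalSpace (V ⊕ EdgeEnd G) :=
  .generateFrom ({U | ∃ v : V, U = {Sum.inl v}} ∪
    {U | ∃ (F : Set (Sym2 V)) (ω : EdgeEnd G),
      F.Finite ∧ F ⊆ G.edgeSet ∧ U = EHatBasic G F ω})

/-- A vertex `v` edge-dominates the edge-end `ω` if `v ∈ C_E(F, ω)` for every finite `F`. -/
def EdgeDominates (v : V) (ω : EdgeEnd G) : Prop :=
  ∀ F : Set (Sym2 V), F.Finite → v ∈ CE G F ω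

/-- The cut `δ(X)`: the edges of `G` with one endpoint in `X` and the other outside of `X`. -/
def cut (X : Set V) : Set (Sym2 V) :=
  {e | e ∈ G.edgeSet ∧ ∃ u v : V, e = s(u, v) ∧ u ∈ X ∧ v ∉ X}

/-- The positive half-ray of a double ray. -/
def DoubleRay.posRay {G : SimpleGraph V} (d : DoubleRay G) : Ray G where
  f n := d.f n
  inj a b h := by exact_mod_cast d.inj h
  adj n := by
    have h := d.adj (n : ℤ)
    rwa [show ((n : ℤ) + 1) = ((n + 1 : ℕ) : ℤ) by push_cast; ring] at h

/-- The negative half-ray of a double ray. -/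
def DoubleRay.negRay {G : SimpleGraph V} (d : DoubleRay G) : Ray G where
  f n := d.f (-n)
  inj a b h := by
    have h2 : -(a : ℤ) = -(b : ℤ) := d.inj h
    exact_mod_cast neg_injective h2
  adj n := by
    have h := (d.adj (-((n : ℤ) + 1))).symm
    rw [show (-((n : ℤ) + 1) + 1) = -(n : ℤ) by ring] at h
    rwa [show (-((n : ℤ) + 1)) = -((n + 1 : ℕ) : ℤ) by push_cast; ring] at h

/-- A generalized path in `G`: a finite path, a ray, or a double ray. -/
inductive GenPath (G : SimpleGraph V) : Type u where
  | finite : (u v : V) → (p : G.Walk u v) → p.IsPath → GenPath G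
  | ray : Ray G → GenPath G
  | doubleRay : DoubleRay G → GenPath G

/-- The edge set of a generalized path. -/
def GenPath.edges {G : SimpleGraph V} : GenPath G → Set (Sym2 V)
  | .finite _ _ p _ => {e | e ∈ p.edges}
  | .ray r => Set.range fun n : ℕ => s(r.f n, r.f (n + 1))
  | .doubleRay d => Set.range fun n : ℤ => s(d.f n, d.f (n + 1))

/-- The vertex set of a generalized path. -/
def GenPath.vertices {G : SimpleGraph V} : GenPath G → Set V
  | .finite _ _ p _ => {v | v ∈ p.support}
  | .ray r => Set.range r.f
  | .doubleRay d => Set.range d.f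

/-- A family of pairwise edge-disjoint generalized paths. -/
def PairwiseEdgeDisjoint (Ps : Set (GenPath G)) : Prop :=
  Ps.Pairwise fun P Q => P.edges ∩ Q.edges = ∅

/-- A graphic `v–ω` path: a ray starting at `v` whose edge-end is `ω`. -/
def IsGraphicVertexEndPath (v : V) (ω : EdgeEnd G) (P : GenPath G) : Prop :=
  ∃ r : Ray G, P = .ray r ∧ r.f 0 = v ∧ r.edgeEnd = ω

/-- A `v–ω` path: a graphic `v–ω` path, or a finite path from `v` to a vertex
edge-dominating `ω`. -/
def IsVertexEndPath (v : V) (ω : EdgeEnd G) (P : GenPath G) : Prop :=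
  IsGraphicVertexEndPath G v ω P ∨
    ∃ u : V, EdgeDominates G u ω ∧
      ∃ (p : G.Walk v u) (hp : p.IsPath), P = .finite v u p hp

/-- A graphic `ω₁–ω₂` path: a double ray one of whose half-rays has edge-end `ω₁` and
the other edge-end `ω₂`. -/
def IsGraphicEndEndPath (ω₁ ω₂ : EdgeEnd G) (P : GenPath G) : Prop :=
  ∃ d : DoubleRay G, P = .doubleRay d ∧
    ((d.posRay.edgeEnd = ω₁ ∧ d.negRay.edgeEnd = ω₂) ∨
     (d.posRay.edgeEnd = ω₂ ∧ d.negRay.edgeEnd = ω₁))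

/-- An `ω₁–ω₂` path: a graphic `ω₁–ω₂` path, or a `v–ωᵢ` path for some vertex `v`
edge-dominating the other edge-end. -/
def IsEndEndPath (ω₁ ω₂ : EdgeEnd G) (P : GenPath G) : Prop :=
  IsGraphicEndEndPath G ω₁ ω₂ P ∨
    (∃ v : V, EdgeDominates G v ω₂ ∧ IsVertexEndPath G v ω₁ P) ∨
    (∃ v : V, EdgeDominates G v ω₁ ∧ IsVertexEndPath G v ω₂ P)

/-- `P` is a `t₁–t₂` path, for points `t₁, t₂ ∈ Ê(G) = V(G) ⊔ Ω_E(G)`. -/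
def Connects : V ⊕ EdgeEnd G → V ⊕ EdgeEnd G → GenPath G → Prop := fun a b P =>
  match a, b with
  | Sum.inl u, Sum.inl v => ∃ (p : G.Walk u v) (hp : p.IsPath), P = .finite u v p hp
  | Sum.inl v, Sum.inr ω => IsVertexEndPath G v ω P
  | Sum.inr ω, Sum.inl v => IsVertexEndPath G v ω P
  | Sum.inr ω₁, Sum.inr ω₂ => IsEndEndPath G ω₁ ω₂ P

/-- An `A–B` path for sets of edge-ends `A` and `B`. -/
def IsABPathEE (A B : Set (EdgeEnd G)) (P : GenPath G) : Prop :=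
  ∃ ω₁ ∈ A, ∃ ω₂ ∈ B, IsEndEndPath G ω₁ ω₂ P

/-!
Every `A–B` path `P` has a finite edge set `F_P` meeting every `A–B` path that shares an
edge with `P`. For a ray with edge-end `ω ∈ A`, say, `ω ∉ closure B` yields a finite `F`
with `Ω_E(F, ω) ∩ B = ∅`; an `A–B` path avoiding `F` that shares an edge with the tail of
the ray beyond `F` lies in one component of `G - F` together with that tail, so its `B`-end
would lie in `Ω_E(F, ω)`. Double rays split into two rays, and finite paths are their own
`F_P`.

If `𝒫` is a maximal family, every `A–B` path outside `𝒫` shares an edge with a member of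
`𝒫`, so every family of edge-disjoint `A–B` paths injects into `𝒫 ⊔ ⋃_{P ∈ 𝒫} F_P`. If `𝒫`
were finite, this would bound `κ` by a finite cardinal; so `𝒫` is infinite, and using the
countable edge sets `E(P)` in place of the `F_P` bounds every family by
`|𝒫| + ℵ₀ · |𝒫| = |𝒫|`.
-/

open Cardinal
open scoped Topology

section DisjointFamilies

variable {α β : Type u} {S : Set α} {E : α → Set β}

def IsDisjointFamily (S : Set α) (E : α → Set β) (Ps : Set α) : Prop :=
  Ps ⊆ S ∧ Ps.PairwiseDisjoint E

def IsFinitelyBlocked (S : Set α) (E : α → Set β) (X : Set β) : Prop :=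
  ∃ F : Set β, F.Finite ∧ ∀ Q ∈ S, (E Q ∩ X).Nonempty → (E Q ∩ F).Nonempty

theorem _root_.Set.Finite.isFinitelyBlocked {X : Set β} (hX : X.Finite) :
    IsFinitelyBlocked S E X :=
  ⟨X, hX, fun _ _ h => h⟩

theorem IsFinitelyBlocked.mono {X Y : Set β} (hY : IsFinitelyBlocked S E Y) (hXY : X ⊆ Y) :
    IsFinitelyBlocked S E X := by
  obtain ⟨F, hF, hblock⟩ := hY
  exact ⟨F, hF, fun Q hQ hQX => hblock Q hQ (hQX.mono (Set.inter_subset_inter_right _ hXY))⟩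

theorem IsFinitelyBlocked.union {X Y : Set β} (hX : IsFinitelyBlocked S E X)
    (hY : IsFinitelyBlocked S E Y) : IsFinitelyBlocked S E (X ∪ Y) := by
  obtain ⟨F₁, hF₁, hblock₁⟩ := hX
  obtain ⟨F₂, hF₂, hblock₂⟩ := hY
  refine ⟨F₁ ∪ F₂, hF₁.union hF₂, fun Q hQ hQXY => ?_⟩
  rw [Set.inter_union_distrib_left] at hQXY ⊢
  rcases Set.union_nonempty.1 hQXY with hQX | hQY
  · exact (hblock₁ Q hQ hQX).mono Set.subset_union_left
  · exact (hblock₂ Q hQ hQY).mono Set.subset_union_right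

theorem mk_le_mk_add_mk_of_inter_nonempty {Ps Qs : Set α} {T : Set β}
    (hQs : Qs.PairwiseDisjoint E) (hT : ∀ Q ∈ Qs, Q ∉ Ps → (E Q ∩ T).Nonempty) :
    #Qs ≤ #Ps + #T := by
  choose f hf using fun Q : ↥(Qs \ Ps) => hT Q Q.2.1 Q.2.2
  have hinj : Function.Injective fun Q => (⟨f Q, (hf Q).2⟩ : T) := fun Q Q' hff => by
    have hfQ : f Q = f Q' := congrArg Subtype.val hff
    exact Subtype.ext (hQs.elim_set Q.2.1 Q'.2.1 (f Q) (hf Q).1 (hfQ ▸ (hf Q').1))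
  calc #Qs = #(Qs ∩ Ps ∪ Qs \ Ps : Set α) := by rw [Set.inter_union_sdiff]
    _ ≤ #(Qs ∩ Ps : Set α) + #(Qs \ Ps : Set α) := mk_union_le _ _
    _ ≤ #Ps + #T := add_le_add (mk_le_mk_of_subset Set.inter_subset_right)
      (mk_le_of_injective hinj)

theorem mk_biUnion_le_of_countable {s : Set α} (hs : s.Infinite) {f : α → Set β}
    (hf : ∀ x ∈ s, (f x).Countable) : #(⋃ x ∈ s, f x) ≤ #s :=
  calc #(⋃ x ∈ s, f x) ≤ #s * ⨆ x : s, #(f x) := mk_biUnion_le f s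
    _ ≤ #s * ℵ₀ := by
      gcongr
      exact ciSup_le' fun x => le_aleph0_iff_set_countable.2 (hf x x.2)
    _ = #s := mul_aleph0_eq (infinite_iff.1 hs.to_subtype)

theorem exists_maximal_isDisjointFamily (S : Set α) (E : α → Set β) :
    ∃ Ps, Maximal (IsDisjointFamily S E) Ps :=
  zorn_subset {Ps | IsDisjointFamily S E Ps} fun c hc hchain =>
    ⟨⋃₀ c, ⟨Set.sUnion_subset fun _ hPs => (hc hPs).1,
      (Set.pairwiseDisjoint_sUnion hchain.directedOn).2 fun _ hPs => (hc hPs).2⟩,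
      fun _ => Set.subset_sUnion_of_mem⟩

theorem _root_.Maximal.exists_inter_nonempty {Ps : Set α} (hPs : Maximal (IsDisjointFamily S E) Ps)
    {Q : α} (hQ : Q ∈ S) (hQPs : Q ∉ Ps) :
    ∃ P ∈ Ps, (E Q ∩ E P).Nonempty := by
  by_contra! hdisj
  have hfamily : IsDisjointFamily S E (insert Q Ps) :=
    ⟨Set.insert_subset hQ hPs.prop.1, hPs.prop.2.insert fun P hP _ =>
      Set.disjoint_iff_inter_eq_empty.2 (hdisj P hP)⟩
  exact hQPs (hPs.2 hfamily (Set.subset_insert Q Ps) (Set.mem_insert Q Ps))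

theorem _root_.Maximal.mk_le_add_mk_biUnion {Ps Qs : Set α}
    (hPs : Maximal (IsDisjointFamily S E) Ps) (hQs : IsDisjointFamily S E Qs) {T : α → Set β}
    (hT : ∀ P ∈ Ps, ∀ Q ∈ S, (E Q ∩ E P).Nonempty → (E Q ∩ T P).Nonempty) :
    #Qs ≤ #Ps + #(⋃ P ∈ Ps, T P) := by
  refine mk_le_mk_add_mk_of_inter_nonempty hQs.2 fun Q hQ hQPs => ?_
  obtain ⟨P, hP, hQP⟩ := hPs.exists_inter_nonempty (hQs.1 hQ) hQPs
  exact (hT P hP Q (hQs.1 hQ) hQP).mono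
    (Set.inter_subset_inter_right _ (Set.subset_biUnion_of_mem hP))

theorem _root_.Maximal.infinite {Ps : Set α} (hPs : Maximal (IsDisjointFamily S E) Ps)
    (hblocked : ∀ P ∈ S, IsFinitelyBlocked S E (E P))
    (hinf : ℵ₀ ≤ ⨆ Qs : {Qs // IsDisjointFamily S E Qs}, #Qs.1) : Ps.Infinite := by
  intro hfin
  choose! F hFfin hF using hblocked
  have hbound : ∀ Qs : {Qs // IsDisjointFamily S E Qs}, #Qs.1 ≤ #Ps + #(⋃ P ∈ Ps, F P) :=
    fun Qs => hPs.mk_le_add_mk_biUnion Qs.2 fun P hP => hF P (hPs.prop.1 hP)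
  have hlt : #Ps + #(⋃ P ∈ Ps, F P) < ℵ₀ := add_lt_aleph0 hfin.lt_aleph0
    (hfin.biUnion fun P hP => hFfin P (hPs.prop.1 hP)).lt_aleph0
  exact (hinf.trans (ciSup_le' hbound)).not_gt hlt

theorem _root_.Maximal.mk_eq_iSup {Ps : Set α} (hPs : Maximal (IsDisjointFamily S E) Ps)
    (hcountable : ∀ P ∈ S, (E P).Countable)
    (hblocked : ∀ P ∈ S, IsFinitelyBlocked S E (E P))
    (hinf : ℵ₀ ≤ ⨆ Qs : {Qs // IsDisjointFamily S E Qs}, #Qs.1) :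
    #Ps = ⨆ Qs : {Qs // IsDisjointFamily S E Qs}, #Qs.1 := by
  have hPs_inf := hPs.infinite hblocked hinf
  refine le_antisymm ?_ (ciSup_le' fun Qs => ?_)
  · exact le_ciSup bddAbove_of_small (⟨Ps, hPs.prop⟩ : {Qs // IsDisjointFamily S E Qs})
  calc #Qs.1 ≤ #Ps + #(⋃ P ∈ Ps, E P) := hPs.mk_le_add_mk_biUnion Qs.2 fun _ _ _ _ h => h
    _ ≤ #Ps + #Ps := by
      gcongr
      exact mk_biUnion_le_of_countable hPs_inf fun P hP => hcountable P (hPs.prop.1 hP)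
    _ = #Ps := add_eq_self (infinite_iff.1 hPs_inf.to_subtype)

end DisjointFamilies

theorem _root_.SimpleGraph.reachable_of_adj_succ_nat {H : SimpleGraph V} {f : ℕ → V} {N : ℕ}
    (h : ∀ k, N ≤ k → H.Adj (f k) (f (k + 1))) {m n : ℕ} (hm : N ≤ m) (hn : N ≤ n) :
    H.Reachable (f m) (f n) := by
  wlog hmn : m ≤ n generalizing m n
  · exact (this hn hm (le_of_not_ge hmn)).symm
  induction n, hmn using Nat.le_induction with
  | base => rfl
  | succ n hmn ih => exact (ih (hm.trans hmn)).trans (h n (hm.trans hmn)).reachable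

theorem _root_.SimpleGraph.reachable_of_adj_succ_int {H : SimpleGraph V} {f : ℤ → V}
    (h : ∀ k, H.Adj (f k) (f (k + 1))) (m n : ℤ) : H.Reachable (f m) (f n) := by
  wlog hmn : m ≤ n generalizing m n
  · exact (this n m (le_of_not_ge hmn)).symm
  induction n, hmn using Int.leInduction with
  | base => rfl
  | succ n _ ih => exact ih.trans (h n).reachable

section Graph

variable {G : SimpleGraph V} {F : Set (Sym2 V)}

theorem Ray.edge_injective (r : Ray G) : Function.Injective fun n => s(r.f n, r.f (n + 1)) := by
  intro m n h
  rcases Sym2.eq_iff.1 h with ⟨h₁, -⟩ | ⟨h₁, h₂⟩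
  · exact r.inj h₁
  · have := r.inj h₁
    have := r.inj h₂
    omega

theorem Ray.exists_tail_not_mem (r : Ray G) (hF : F.Finite) :
    ∃ N, ∀ n, N ≤ n → s(r.f n, r.f (n + 1)) ∉ F := by
  obtain ⟨N, hN⟩ := (hF.preimage r.edge_injective.injOn).bddAbove
  exact ⟨N + 1, fun n hn hnF => by have := hN hnF; omega⟩

theorem Ray.reachable_of_tail (r : Ray G) {N : ℕ}
    (hN : ∀ n, N ≤ n → s(r.f n, r.f (n + 1)) ∉ F) {m n : ℕ} (hm : N ≤ m) (hn : N ≤ n) :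
    (G.deleteEdges F).Reachable (r.f m) (r.f n) :=
  SimpleGraph.reachable_of_adj_succ_nat
    (fun k hk => SimpleGraph.deleteEdges_adj.2 ⟨r.adj k, hN k hk⟩) hm hn

theorem GenPath.reachable_of_disjoint (Q : GenPath G) (hQF : Disjoint Q.edges F) {x y : V}
    (hx : x ∈ Q.vertices) (hy : y ∈ Q.vertices) : (G.deleteEdges F).Reachable x y := by
  classical
  cases Q with
  | finite u v p _ =>
    have hreach : ∀ z ∈ p.support, (G.deleteEdges F).Reachable u z := fun z hz =>
      ((p.takeUntil z hz).toDeleteEdges F fun e he =>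
        Set.disjoint_left.1 hQF (p.edges_takeUntil_subset_edges hz he)).reachable
    exact (hreach x hx).symm.trans (hreach y hy)
  | ray r =>
    obtain ⟨⟨m, rfl⟩, ⟨n, rfl⟩⟩ := And.intro hx hy
    exact r.reachable_of_tail (fun k _ => Set.disjoint_left.1 hQF ⟨k, rfl⟩)
      (Nat.zero_le m) (Nat.zero_le n)
  | doubleRay d =>
    obtain ⟨⟨m, rfl⟩, ⟨n, rfl⟩⟩ := And.intro hx hy
    exact SimpleGraph.reachable_of_adj_succ_int (fun k =>
      SimpleGraph.deleteEdges_adj.2 ⟨d.adj k, Set.disjoint_left.1 hQF ⟨k, rfl⟩⟩) m n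

theorem GenPath.mem_vertices_of_mem_edges {Q : GenPath G} {a b : V} (h : s(a, b) ∈ Q.edges) :
    a ∈ Q.vertices := by
  cases Q with
  | finite u v p _ => exact p.fst_mem_support_of_mem_edges h
  | ray r =>
    obtain ⟨n, hn⟩ := h
    rcases Sym2.eq_iff.1 hn with ⟨h₁, -⟩ | ⟨-, h₂⟩
    exacts [⟨n, h₁⟩, ⟨n + 1, h₂⟩]
  | doubleRay d =>
    obtain ⟨n, hn⟩ := h
    rcases Sym2.eq_iff.1 hn with ⟨h₁, -⟩ | ⟨-, h₂⟩
    exacts [⟨n, h₁⟩, ⟨n + 1, h₂⟩]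

theorem GenPath.countable_edges (Q : GenPath G) : Q.edges.Countable := by
  cases Q with
  | finite u v p _ => exact p.edges.finite_toSet.countable
  | ray r => exact Set.countable_range _
  | doubleRay d => exact Set.countable_range _

theorem DoubleRay.edges_eq_union (d : DoubleRay G) :
    (GenPath.doubleRay d).edges =
      (GenPath.ray d.posRay).edges ∪ (GenPath.ray d.negRay).edges := by
  refine Set.Subset.antisymm ?_ (Set.union_subset ?_ ?_)
  · rintro _ ⟨k, rfl⟩
    rcases k with n | n
    · exact Or.inl ⟨n, rfl⟩
    · refine Or.inr ⟨n, ?_⟩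
      show s(d.f (-n), d.f (-(n + 1 : ℕ))) = s(d.f (Int.negSucc n), d.f (Int.negSucc n + 1))
      rw [Sym2.eq_swap, Int.negSucc_eq]
      push_cast
      ring_nf
  · rintro _ ⟨n, rfl⟩
    exact ⟨n, rfl⟩
  · rintro _ ⟨n, rfl⟩
    refine ⟨-(n + 1 : ℕ), ?_⟩
    show s(d.f (-(n + 1 : ℕ)), d.f (-(n + 1 : ℕ) + 1)) = s(d.f (-n), d.f (-(n + 1 : ℕ)))
    rw [Sym2.eq_swap]
    push_cast
    ring_nf

theorem SameComp.symm {r s : Ray G} (h : SameComp G F r s) : SameComp G F s r := by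
  obtain ⟨N, hN⟩ := h
  exact ⟨N, fun m n hm hn => (hN n m hn hm).symm⟩

theorem SameComp.trans {r s t : Ray G} (h₁ : SameComp G F r s) (h₂ : SameComp G F s t) :
    SameComp G F r t := by
  obtain ⟨N₁, hN₁⟩ := h₁
  obtain ⟨N₂, hN₂⟩ := h₂
  exact ⟨max N₁ N₂, fun m n hm hn =>
    (hN₁ m (max N₁ N₂) (le_of_max_le_left hm) le_sup_left).trans
      (hN₂ (max N₁ N₂) n le_sup_right (le_of_max_le_right hn))⟩

theorem sameComp_refl (r : Ray G) (hF : F.Finite) : SameComp G F r r := by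
  obtain ⟨N, hN⟩ := r.exists_tail_not_mem hF
  exact ⟨N, fun m n hm hn => r.reachable_of_tail hN hm hn⟩

theorem edgeEquiv_equivalence : Equivalence (EdgeEquiv G) where
  refl r _ hF := sameComp_refl r hF
  symm h F hF := (h F hF).symm
  trans h₁ h₂ F hF := (h₁ F hF).trans (h₂ F hF)

theorem Ray.edgeEquiv_of_edgeEnd_eq {r s : Ray G} (h : r.edgeEnd = s.edgeEnd) :
    EdgeEquiv G r s :=
  edgeEquiv_equivalence.eqvGen_iff.1 (Quot.eq.1 h)

theorem omegaE_anti {F F' : Set (Sym2 V)} (h : F ⊆ F') (ω : EdgeEnd G) :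
    OmegaE G F' ω ⊆ OmegaE G F ω := by
  rintro η ⟨r, s, hr, hs, N, hN⟩
  exact ⟨r, s, hr, hs, N, fun m n hm hn =>
    (hN m n hm hn).mono (SimpleGraph.deleteEdges_anti h)⟩

theorem omegaE_subset_of_mem (hF : F.Finite) {ω ω₀ : EdgeEnd G} (h : ω ∈ OmegaE G F ω₀) :
    OmegaE G F ω ⊆ OmegaE G F ω₀ := by
  obtain ⟨r₀, s₀, hr₀, hs₀, h₀⟩ := h
  rintro η ⟨r, s, hr, hs, h⟩
  have hs₀r : SameComp G F s₀ r := Ray.edgeEquiv_of_edgeEnd_eq (hs₀.trans hr.symm) F hF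
  exact ⟨r₀, s, hr₀, hs, (h₀.trans hs₀r).trans h⟩

theorem exists_finite_omegaE_subset {U : Set (EdgeEnd G)} (hU : IsOpen[edgeEndTopology G] U)
    {ω : EdgeEnd G} (hω : ω ∈ U) : ∃ F : Set (Sym2 V), F.Finite ∧ OmegaE G F ω ⊆ U := by
  induction hU with
  | basic U hU =>
    obtain ⟨F, ω₀, hF, -, rfl⟩ := hU
    exact ⟨F, hF, omegaE_subset_of_mem hF hω⟩
  | univ => exact ⟨∅, Set.finite_empty, Set.subset_univ _⟩
  | inter U U' _ _ ih ih' =>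
    obtain ⟨F, hF, hFU⟩ := ih hω.1
    obtain ⟨F', hF', hFU'⟩ := ih' hω.2
    exact ⟨F ∪ F', hF.union hF', Set.subset_inter
      ((omegaE_anti Set.subset_union_left ω).trans hFU)
      ((omegaE_anti Set.subset_union_right ω).trans hFU')⟩
  | sUnion 𝒰 _ ih =>
    obtain ⟨U, hU𝒰, hωU⟩ := hω
    obtain ⟨F, hF, hFU⟩ := ih U hU𝒰 hωU
    exact ⟨F, hF, hFU.trans (Set.subset_sUnion_of_mem hU𝒰)⟩

theorem exists_finite_disjoint_omegaE {X : Set (EdgeEnd G)} {ω : EdgeEnd G}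
    (h : ω ∉ closure[edgeEndTopology G] X) :
    ∃ F : Set (Sym2 V), F.Finite ∧ Disjoint (OmegaE G F ω) X := by
  let := edgeEndTopology G
  obtain ⟨F, hF, hFX⟩ := exists_finite_omegaE_subset isClosed_closure.isOpen_compl h
  exact ⟨F, hF, Set.disjoint_of_subset hFX subset_closure disjoint_compl_left⟩

theorem mem_CE_of_reachable {ω : EdgeEnd G} {x y : V} (hx : x ∈ CE G F ω)
    (hxy : (G.deleteEdges F).Reachable x y) : y ∈ CE G F ω := by
  obtain ⟨r, hr, N, hN⟩ := hx
  exact ⟨r, hr, N, fun n hn => (hN n hn).trans hxy⟩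

theorem GenPath.vertices_subset_CE (Q : GenPath G) (hQF : Disjoint Q.edges F) {ω : EdgeEnd G}
    {x : V} (hx : x ∈ Q.vertices) (hxω : x ∈ CE G F ω) : Q.vertices ⊆ CE G F ω :=
  fun _ hy => mem_CE_of_reachable hxω (Q.reachable_of_disjoint hQF hx hy)

theorem Ray.start_mem_CE (r : Ray G) (hrF : Disjoint (GenPath.ray r).edges F) :
    r.f 0 ∈ CE G F r.edgeEnd :=
  ⟨r, rfl, 0, fun n _ => (GenPath.ray r).reachable_of_disjoint hrF ⟨n, rfl⟩ ⟨0, rfl⟩⟩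

theorem Ray.mem_omegaE_of_mem_CE (r : Ray G) {N n : ℕ}
    (hN : ∀ k, N ≤ k → s(r.f k, r.f (k + 1)) ∉ F) (hn : N ≤ n) {η : EdgeEnd G}
    (h : r.f n ∈ CE G F η) : η ∈ OmegaE G F r.edgeEnd := by
  obtain ⟨s, hs, M, hM⟩ := h
  exact ⟨r, s, rfl, hs, max N M, fun i j hi hj =>
    (r.reachable_of_tail hN (le_of_max_le_left hi) hn).trans (hM j (le_of_max_le_right hj)).symm⟩

variable {ω ω₁ ω₂ : EdgeEnd G} {Q : GenPath G}

theorem IsGraphicEndEndPath.vertices_subset_CE (h : IsGraphicEndEndPath G ω₁ ω₂ Q)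
    (hQF : Disjoint Q.edges F) : Q.vertices ⊆ CE G F ω₁ := by
  obtain ⟨d, rfl, hd⟩ := h
  have hhalves := hQF
  rw [d.edges_eq_union, Set.disjoint_union_left] at hhalves
  rcases hd with ⟨rfl, -⟩ | ⟨-, rfl⟩
  · exact GenPath.vertices_subset_CE _ hQF ⟨0, rfl⟩ (d.posRay.start_mem_CE hhalves.1)
  · exact GenPath.vertices_subset_CE _ hQF ⟨-(0 : ℕ), rfl⟩ (d.negRay.start_mem_CE hhalves.2)

theorem IsVertexEndPath.start_mem_vertices {v : V} (h : IsVertexEndPath G v ω Q) :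
    v ∈ Q.vertices := by
  rcases h with ⟨r, rfl, rfl, -⟩ | ⟨u, -, p, -, rfl⟩
  exacts [⟨0, rfl⟩, p.start_mem_support]

theorem IsVertexEndPath.vertices_subset_CE {v : V} (h : IsVertexEndPath G v ω Q) (hF : F.Finite)
    (hQF : Disjoint Q.edges F) : Q.vertices ⊆ CE G F ω := by
  rcases h with ⟨r, rfl, -, rfl⟩ | ⟨u, hu, p, _, rfl⟩
  · exact GenPath.vertices_subset_CE _ hQF ⟨0, rfl⟩ (r.start_mem_CE hQF)
  · exact GenPath.vertices_subset_CE _ hQF p.end_mem_support (hu F hF)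

theorem IsEndEndPath.symm (h : IsEndEndPath G ω₁ ω₂ Q) : IsEndEndPath G ω₂ ω₁ Q := by
  rcases h with ⟨d, hd, h⟩ | h | h
  · exact Or.inl ⟨d, hd, h.symm⟩
  · exact Or.inr (Or.inr h)
  · exact Or.inr (Or.inl h)

theorem IsEndEndPath.vertices_subset_CE_left (h : IsEndEndPath G ω₁ ω₂ Q) (hF : F.Finite)
    (hQF : Disjoint Q.edges F) : Q.vertices ⊆ CE G F ω₁ := by
  rcases h with h | ⟨v, -, hv⟩ | ⟨v, hv₁, hv⟩
  · exact h.vertices_subset_CE hQF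
  · exact hv.vertices_subset_CE hF hQF
  · exact Q.vertices_subset_CE hQF hv.start_mem_vertices (hv₁ F hF)

theorem IsEndEndPath.vertices_subset_CE_right (h : IsEndEndPath G ω₁ ω₂ Q) (hF : F.Finite)
    (hQF : Disjoint Q.edges F) : Q.vertices ⊆ CE G F ω₂ :=
  h.symm.vertices_subset_CE_left hF hQF

theorem IsABPathEE.symm {A B : Set (EdgeEnd G)} (h : IsABPathEE G A B Q) : IsABPathEE G B A Q :=
  let ⟨ω₁, hω₁, ω₂, hω₂, h⟩ := h
  ⟨ω₂, hω₂, ω₁, hω₁, h.symm⟩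

theorem pairwiseEdgeDisjoint_iff {Ps : Set (GenPath G)} :
    PairwiseEdgeDisjoint G Ps ↔ Ps.PairwiseDisjoint GenPath.edges := by
  simp only [PairwiseEdgeDisjoint, Set.PairwiseDisjoint, Set.Pairwise, Function.onFun,
    Set.disjoint_iff_inter_eq_empty]

variable {A B : Set (EdgeEnd G)}

theorem Ray.isFinitelyBlocked (r : Ray G) (hr : r.edgeEnd ∉ closure[edgeEndTopology G] B) :
    IsFinitelyBlocked {Q | IsABPathEE G A B Q} GenPath.edges (GenPath.ray r).edges := by
  obtain ⟨F, hF, hFB⟩ := exists_finite_disjoint_omegaE hr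
  obtain ⟨N, hN⟩ := r.exists_tail_not_mem hF
  refine ⟨F ∪ (fun k => s(r.f k, r.f (k + 1))) '' Set.Iio N,
    hF.union ((Set.finite_Iio N).image _), ?_⟩
  rintro Q ⟨_, _, η, hη, hQ⟩ ⟨_, heQ, n, rfl⟩
  by_contra hQF
  rw [Set.not_nonempty_iff_eq_empty, ← Set.disjoint_iff_inter_eq_empty,
    Set.disjoint_union_right] at hQF
  have hn : N ≤ n := not_lt.1 fun hn => Set.disjoint_left.1 hQF.2 heQ ⟨n, hn, rfl⟩
  have hrn : r.f n ∈ CE G F η :=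
    hQ.vertices_subset_CE_right hF hQF.1 (GenPath.mem_vertices_of_mem_edges heQ)
  exact Set.disjoint_left.1 hFB (r.mem_omegaE_of_mem_CE hN hn hrn) hη

theorem Ray.isFinitelyBlocked_of_mem (hAB : closure[edgeEndTopology G] A ∩ B = ∅)
    (hBA : A ∩ closure[edgeEndTopology G] B = ∅) (r : Ray G) (hr : r.edgeEnd ∈ A ∪ B) :
    IsFinitelyBlocked {Q | IsABPathEE G A B Q} GenPath.edges (GenPath.ray r).edges := by
  rcases hr with hA | hB
  · exact r.isFinitelyBlocked fun h => Set.eq_empty_iff_forall_notMem.1 hBA _ ⟨hA, h⟩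
  · have hswap : {Q | IsABPathEE G A B Q} = {Q | IsABPathEE G B A Q} :=
      Set.ext fun Q => ⟨IsABPathEE.symm, IsABPathEE.symm⟩
    rw [hswap]
    exact r.isFinitelyBlocked fun h => Set.eq_empty_iff_forall_notMem.1 hAB _ ⟨h, hB⟩

theorem IsVertexEndPath.isFinitelyBlocked (hAB : closure[edgeEndTopology G] A ∩ B = ∅)
    (hBA : A ∩ closure[edgeEndTopology G] B = ∅) {v : V} (h : IsVertexEndPath G v ω Q)
    (hω : ω ∈ A ∪ B) : IsFinitelyBlocked {Q | IsABPathEE G A B Q} GenPath.edges Q.edges := by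
  rcases h with ⟨r, rfl, -, rfl⟩ | ⟨u, -, p, _, rfl⟩
  · exact r.isFinitelyBlocked_of_mem hAB hBA hω
  · exact p.edges.finite_toSet.isFinitelyBlocked

theorem IsABPathEE.isFinitelyBlocked (hAB : closure[edgeEndTopology G] A ∩ B = ∅)
    (hBA : A ∩ closure[edgeEndTopology G] B = ∅) (hQ : IsABPathEE G A B Q) :
    IsFinitelyBlocked {Q | IsABPathEE G A B Q} GenPath.edges Q.edges := by
  obtain ⟨ω₁, hω₁, ω₂, hω₂, hQ⟩ := hQ
  rcases hQ with ⟨d, rfl, hd⟩ | ⟨v, -, hv⟩ | ⟨v, -, hv⟩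
  · have hends : d.posRay.edgeEnd ∈ A ∪ B ∧ d.negRay.edgeEnd ∈ A ∪ B := by
      rcases hd with ⟨rfl, rfl⟩ | ⟨rfl, rfl⟩
      exacts [⟨Or.inl hω₁, Or.inr hω₂⟩, ⟨Or.inr hω₂, Or.inl hω₁⟩]
    rw [d.edges_eq_union]
    exact (d.posRay.isFinitelyBlocked_of_mem hAB hBA hends.1).union
      (d.negRay.isFinitelyBlocked_of_mem hAB hBA hends.2)
  · exact hv.isFinitelyBlocked hAB hBA (Or.inl hω₁)
  · exact hv.isFinitelyBlocked hAB hBA (Or.inr hω₂)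

end Graph

/-- If the supremum `κ` of the cardinalities of families of pairwise edge-disjoint `A–B`
paths is infinite, then every `⊆`-maximal such family has cardinality `κ`; in particular
the supremum is attained. -/
theorem maximal_family_attains_sup (A B : Set (EdgeEnd G))
    (hAB : @closure _ (edgeEndTopology G) A ∩ B = ∅)
    (hBA : A ∩ @closure _ (edgeEndTopology G) B = ∅)
    (κ : Cardinal.{u})
    (hκ : κ = ⨆ Ps : {Ps : Set (GenPath G) //
        (∀ P ∈ Ps, IsABPathEE G A B P) ∧ PairwiseEdgeDisjoint G Ps},
      Cardinal.mk ↥Ps.1)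
    (hinf : Cardinal.aleph0 ≤ κ) :
    (∀ Ps : Set (GenPath G), (∀ P ∈ Ps, IsABPathEE G A B P) → PairwiseEdgeDisjoint G Ps →
      (∀ Qs : Set (GenPath G), Ps ⊆ Qs → (∀ P ∈ Qs, IsABPathEE G A B P) →
        PairwiseEdgeDisjoint G Qs → Qs = Ps) →
      Cardinal.mk ↥Ps = κ) ∧
    ∃ Ps : Set (GenPath G), (∀ P ∈ Ps, IsABPathEE G A B P) ∧ PairwiseEdgeDisjoint G Ps ∧
      Cardinal.mk ↥Ps = κ := by
  let S : Set (GenPath G) := {P | IsABPathEE G A B P}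
  have hfamily : (fun Ps : Set (GenPath G) =>
      (∀ P ∈ Ps, IsABPathEE G A B P) ∧ PairwiseEdgeDisjoint G Ps) =
      IsDisjointFamily S GenPath.edges :=
    funext fun _ => propext (and_congr_right' pairwiseEdgeDisjoint_iff)
  rw [hfamily] at hκ
  subst hκ
  have hmaximal : ∀ Ps, Maximal (IsDisjointFamily S GenPath.edges) Ps →
      #Ps = ⨆ Qs : {Qs // IsDisjointFamily S GenPath.edges Qs}, #Qs.1 :=
    fun Ps hPs => hPs.mk_eq_iSup (fun P _ => P.countable_edges)
      (fun _ hP => IsABPathEE.isFinitelyBlocked hAB hBA hP) hinf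
  refine ⟨fun Ps hPsAB hPs hPsmax => hmaximal Ps ⟨⟨hPsAB, pairwiseEdgeDisjoint_iff.1 hPs⟩,
    fun Qs hQs hle => (hPsmax Qs hle hQs.1 (pairwiseEdgeDisjoint_iff.2 hQs.2)).le⟩, ?_⟩
  obtain ⟨Ps, hPs⟩ := exists_maximal_isDisjointFamily S GenPath.edges
  exact ⟨Ps, hPs.prop.1, pairwiseEdgeDisjoint_iff.2 hPs.prop.2, hmaximal Ps hPs⟩

end EdgeEndPaper
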